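/- arXiv:2504.07742 — 2 statements merged into one kernel-verified Lean document; each statement's English description precedes it below -/
import Mathlib

section
/- Let n ≥ 1, let K and K̂ be symmetric positive semidefinite n×n real matrices, let σ > 0, set A = K + σ²I, B = K̂ + σ²I, and C_M = ‖A⁻¹‖ · ‖B⁻¹‖. Let k ∈ ℝⁿ and k** ∈ ℝ be such that s² := k** − kᵀA⁻¹k ≥ 0 and s̃² := k** − kᵀB⁻¹k ≥ 0. Then |√(s²) − √(s̃²)| ≤ ‖k‖ · √(C_M · ‖K − K̂‖). -/
open scoped Matrix

/-- The L2 operator norm (spectral norm) of a real square matrix. -/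
noncomputable def l2OpNorm {n : ℕ} (M : Matrix (Fin n) (Fin n) ℝ) : ℝ :=
  ‖Matrix.toEuclideanCLM (𝕜 := ℝ) M‖

/-- The Euclidean norm of a vector in `ℝⁿ`. -/
noncomputable def euclNorm {n : ℕ} (v : Fin n → ℝ) : ℝ :=
  Real.sqrt (∑ i, v i ^ 2)

lemma sqrt_diff_le_aux (a b : ℝ) (ha : 0 ≤ a) (hb : 0 ≤ b) :
    |Real.sqrt a - Real.sqrt b| ≤ Real.sqrt |a - b| := by
  rcases le_total a b with h | h
  · rw [abs_sub_comm, abs_sub_comm a b,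
      abs_of_nonneg (sub_nonneg.mpr h),
      abs_of_nonneg (sub_nonneg.mpr (Real.sqrt_le_sqrt h))]
    nlinarith [Real.sq_sqrt ha, Real.sq_sqrt hb, Real.sqrt_le_sqrt h,
      Real.sqrt_nonneg a, Real.sq_sqrt (sub_nonneg.mpr h),
      Real.sqrt_nonneg (b - a), Real.sqrt_nonneg b]
  · rw [abs_of_nonneg (sub_nonneg.mpr h),
      abs_of_nonneg (sub_nonneg.mpr (Real.sqrt_le_sqrt h))]
    nlinarith [Real.sq_sqrt ha, Real.sq_sqrt hb, Real.sqrt_le_sqrt h,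
      Real.sqrt_nonneg b, Real.sq_sqrt (sub_nonneg.mpr h),
      Real.sqrt_nonneg (a - b), Real.sqrt_nonneg a]

lemma euclNorm_eq_aux {n : ℕ} (k : Fin n → ℝ) :
    euclNorm k = ‖(WithLp.equiv 2 (Fin n → ℝ)).symm k‖ := by
  rw [EuclideanSpace.norm_eq, euclNorm]
  congr 1
  refine Finset.sum_congr rfl fun i _ => ?_
  simp [Real.norm_eq_abs, sq_abs]

lemma quad_bound_aux {n : ℕ} (M : Matrix (Fin n) (Fin n) ℝ) (k : Fin n → ℝ) :
    |k ⬝ᵥ (M *ᵥ k)| ≤ l2OpNorm M * euclNorm k ^ 2 := by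
  set x : EuclideanSpace ℝ (Fin n) := (WithLp.equiv 2 (Fin n → ℝ)).symm k with hx
  have hdot : k ⬝ᵥ (M *ᵥ k) = @inner ℝ _ _ x (Matrix.toEuclideanCLM (𝕜 := ℝ) M x) := by
    rw [hx, WithLp.equiv_symm_apply, Matrix.toEuclideanCLM_toLp, PiLp.inner_apply]
    simp [Matrix.toLin'_apply, dotProduct, mul_comm]
  rw [hdot, euclNorm_eq_aux]
  calc |@inner ℝ _ _ x (Matrix.toEuclideanCLM (𝕜 := ℝ) M x)|
      ≤ ‖x‖ * ‖Matrix.toEuclideanCLM (𝕜 := ℝ) M x‖ := abs_real_inner_le_norm _ _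
    _ ≤ ‖x‖ * (l2OpNorm M * ‖x‖) := by
        gcongr
        exact (Matrix.toEuclideanCLM (𝕜 := ℝ) M).le_opNorm x
    _ = l2OpNorm M * ‖x‖ ^ 2 := by ring

lemma l2OpNorm_mul_le_aux {n : ℕ} (M N : Matrix (Fin n) (Fin n) ℝ) :
    l2OpNorm (M * N) ≤ l2OpNorm M * l2OpNorm N := by
  unfold l2OpNorm
  rw [map_mul]
  exact norm_mul_le _ _

/-- Posterior standard-deviation error bound for the subset-fitted GP:
with `A = K + σ²I`, `B = K̂ + σ²I`, `C_M = ‖A⁻¹‖‖B⁻¹‖`, `s² = k** − kᵀA⁻¹k ≥ 0`,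
`s̃² = k** − kᵀB⁻¹k ≥ 0`, one has `|√(s²) − √(s̃²)| ≤ ‖k‖ √(C_M ‖K − K̂‖)`. -/
theorem stmt3 {n : ℕ} (hn : 1 ≤ n) (K Khat : Matrix (Fin n) (Fin n) ℝ)
    (hK : K.PosSemidef) (hKhat : Khat.PosSemidef) (σ : ℝ) (hσ : 0 < σ)
    (k : Fin n → ℝ) (kstar : ℝ)
    (hs : 0 ≤ kstar - k ⬝ᵥ ((K + σ ^ 2 • (1 : Matrix (Fin n) (Fin n) ℝ))⁻¹ *ᵥ k))
    (hs' : 0 ≤ kstar - k ⬝ᵥ ((Khat + σ ^ 2 • (1 : Matrix (Fin n) (Fin n) ℝ))⁻¹ *ᵥ k)) :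
    |Real.sqrt (kstar - k ⬝ᵥ ((K + σ ^ 2 • (1 : Matrix (Fin n) (Fin n) ℝ))⁻¹ *ᵥ k)) -
        Real.sqrt (kstar - k ⬝ᵥ ((Khat + σ ^ 2 • (1 : Matrix (Fin n) (Fin n) ℝ))⁻¹ *ᵥ k))| ≤
      euclNorm k *
        Real.sqrt
          ((l2OpNorm ((K + σ ^ 2 • (1 : Matrix (Fin n) (Fin n) ℝ))⁻¹) *
              l2OpNorm ((Khat + σ ^ 2 • (1 : Matrix (Fin n) (Fin n) ℝ))⁻¹)) *
            l2OpNorm (K - Khat)) := by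
  set A := K + σ ^ 2 • (1 : Matrix (Fin n) (Fin n) ℝ) with hA
  set B := Khat + σ ^ 2 • (1 : Matrix (Fin n) (Fin n) ℝ) with hB
  have hone : (σ ^ 2 • (1 : Matrix (Fin n) (Fin n) ℝ)).PosDef := by
    rw [Matrix.smul_one_eq_diagonal]
    exact Matrix.posDef_diagonal_iff.mpr fun _ => by positivity
  have hApd : A.PosDef := Matrix.PosDef.posSemidef_add hK hone
  have hBpd : B.PosDef := Matrix.PosDef.posSemidef_add hKhat hone
  have hAinv : A * A⁻¹ = 1 :=
    Matrix.mul_nonsing_inv A ((Matrix.isUnit_iff_isUnit_det A).mp hApd.isUnit)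
  have hBinv : B⁻¹ * B = 1 :=
    Matrix.nonsing_inv_mul B ((Matrix.isUnit_iff_isUnit_det B).mp hBpd.isUnit)
  -- key matrix identity
  have hid : B⁻¹ - A⁻¹ = B⁻¹ * (K - Khat) * A⁻¹ := by
    have h1 : K - Khat = A - B := by rw [hA, hB]; abel
    rw [h1, Matrix.mul_sub, Matrix.sub_mul, Matrix.mul_assoc, hAinv, Matrix.mul_one, hBinv,
      Matrix.one_mul]
  -- norm bound for the difference of inverses
  have hnorm : l2OpNorm (B⁻¹ - A⁻¹) ≤ l2OpNorm A⁻¹ * l2OpNorm B⁻¹ * l2OpNorm (K - Khat) := by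
    rw [hid]
    calc l2OpNorm (B⁻¹ * (K - Khat) * A⁻¹)
        ≤ l2OpNorm (B⁻¹ * (K - Khat)) * l2OpNorm A⁻¹ := l2OpNorm_mul_le_aux _ _
      _ ≤ l2OpNorm B⁻¹ * l2OpNorm (K - Khat) * l2OpNorm A⁻¹ := by
          have h0 : 0 ≤ l2OpNorm A⁻¹ := norm_nonneg _
          exact mul_le_mul_of_nonneg_right (l2OpNorm_mul_le_aux _ _) h0
      _ = l2OpNorm A⁻¹ * l2OpNorm B⁻¹ * l2OpNorm (K - Khat) := by ring
  -- quadratic form difference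
  have hdiff : (kstar - k ⬝ᵥ (A⁻¹ *ᵥ k)) - (kstar - k ⬝ᵥ (B⁻¹ *ᵥ k))
      = k ⬝ᵥ ((B⁻¹ - A⁻¹) *ᵥ k) := by
    rw [Matrix.sub_mulVec, dotProduct_sub]; ring
  have hquad : |(kstar - k ⬝ᵥ (A⁻¹ *ᵥ k)) - (kstar - k ⬝ᵥ (B⁻¹ *ᵥ k))|
      ≤ euclNorm k ^ 2 * (l2OpNorm A⁻¹ * l2OpNorm B⁻¹ * l2OpNorm (K - Khat)) := by
    rw [hdiff]
    calc |k ⬝ᵥ ((B⁻¹ - A⁻¹) *ᵥ k)| ≤ l2OpNorm (B⁻¹ - A⁻¹) * euclNorm k ^ 2 :=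
          quad_bound_aux _ _
      _ ≤ (l2OpNorm A⁻¹ * l2OpNorm B⁻¹ * l2OpNorm (K - Khat)) * euclNorm k ^ 2 := by
          have h0 : (0:ℝ) ≤ euclNorm k ^ 2 := sq_nonneg _
          exact mul_le_mul_of_nonneg_right hnorm h0
      _ = euclNorm k ^ 2 * (l2OpNorm A⁻¹ * l2OpNorm B⁻¹ * l2OpNorm (K - Khat)) := by ring
  have hek : 0 ≤ euclNorm k := Real.sqrt_nonneg _
  calc |Real.sqrt (kstar - k ⬝ᵥ (A⁻¹ *ᵥ k)) - Real.sqrt (kstar - k ⬝ᵥ (B⁻¹ *ᵥ k))|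
      ≤ Real.sqrt |(kstar - k ⬝ᵥ (A⁻¹ *ᵥ k)) - (kstar - k ⬝ᵥ (B⁻¹ *ᵥ k))| :=
        sqrt_diff_le_aux _ _ hs hs'
    _ ≤ Real.sqrt (euclNorm k ^ 2 * (l2OpNorm A⁻¹ * l2OpNorm B⁻¹ * l2OpNorm (K - Khat))) :=
        Real.sqrt_le_sqrt hquad
    _ = euclNorm k * Real.sqrt (l2OpNorm A⁻¹ * l2OpNorm B⁻¹ * l2OpNorm (K - Khat)) := by
        rw [Real.sqrt_mul (sq_nonneg _), Real.sqrt_sq hek]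
end

section
/- Let M and N be natural numbers with 1 ≤ M < N, and let E : ℕ → ℝ satisfy E_t ≥ 0 for all t, E_0 = M, and E_{t+1} ≤ E_t · (1 − 1/(N − t)) for all t with 0 ≤ t ≤ M − 1. Then √(E_M) ≤ √M · exp(−M/(2N)). -/
/-- Exponential decay of the subspace approximation error `ε_g = √(E M)` of greedy
gradient-based Nyström column selection: if `E 0 = M`, `E t ≥ 0`, and
`E (t+1) ≤ E t · (1 − 1/(N − t))` for `0 ≤ t ≤ M − 1` (with `1 ≤ M < N`),
then `√(E M) ≤ √M · exp(−M/(2N))`. -/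
theorem stmt18 (M N : ℕ) (h1 : 1 ≤ M) (h2 : M < N) (E : ℕ → ℝ)
    (hE : ∀ t, 0 ≤ E t) (hE0 : E 0 = M)
    (hstep : ∀ t, t ≤ M - 1 → E (t + 1) ≤ E t * (1 - 1 / ((N : ℝ) - t))) :
    Real.sqrt (E M) ≤ Real.sqrt M * Real.exp (-(M : ℝ) / (2 * N)) := by
  have hN : (0:ℝ) < N := by
    exact_mod_cast (by omega : 0 < N)
  have key : ∀ k, k ≤ M → E k ≤ M * Real.exp (-(k:ℝ)/N) := by
    intro k hk
    induction k with
    | zero => simp [hE0]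
    | succ t ih =>
      have ht : t ≤ M - 1 := by omega
      have htM : t ≤ M := by omega
      have htN : (t:ℝ) < N := by exact_mod_cast (by omega : t < N)
      have hNt : (0:ℝ) < (N:ℝ) - t := by linarith
      have h1' : 1 - 1/((N:ℝ)-t) ≤ Real.exp (-(1/((N:ℝ)-t))) := by
        have := Real.add_one_le_exp (-(1/((N:ℝ)-t)))
        linarith
      have h2' : Real.exp (-(1/((N:ℝ)-t))) ≤ Real.exp (-(1/(N:ℝ))) := by
        apply Real.exp_le_exp.mpr
        have ht0 : (0:ℝ) ≤ t := Nat.cast_nonneg t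
        have : 1/(N:ℝ) ≤ 1/((N:ℝ)-t) := by
          apply one_div_le_one_div_of_le hNt; linarith
        linarith
      calc E (t+1) ≤ E t * (1 - 1/((N:ℝ)-t)) := hstep t ht
        _ ≤ E t * Real.exp (-(1/(N:ℝ))) :=
            mul_le_mul_of_nonneg_left (h1'.trans h2') (hE t)
        _ ≤ (M * Real.exp (-(t:ℝ)/N)) * Real.exp (-(1/(N:ℝ))) :=
            mul_le_mul_of_nonneg_right (ih htM) (Real.exp_nonneg _)
        _ = M * Real.exp (-((t:ℕ)+1:ℝ)/N) := by
            rw [mul_assoc, ← Real.exp_add]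
            congr 1
            field_simp
            ring
        _ = M * Real.exp (-(((t+1:ℕ)):ℝ)/N) := by push_cast; ring_nf
  have hM := key M le_rfl
  have hsq := Real.sqrt_le_sqrt hM
  refine hsq.trans (le_of_eq ?_)
  rw [Real.sqrt_mul (Nat.cast_nonneg M), ← Real.exp_half,
    show -(M:ℝ)/N/2 = -(M:ℝ)/(2*N) by ring]
end
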